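/- arXiv:2303.10069 — 6 statements merged into one kernel-verified Lean document; each statement's English description precedes it below -/
import Mathlib

section
/- Let M ≥ 1 and let u, v ∈ ℝ^M. Then the supremum over all c ∈ ℝ^M with ‖c‖ = 1 of |⟨c,u⟩ + i⟨c,v⟩| equals sqrt( ( ‖u‖² + ‖v‖² + sqrt( (‖u‖² − ‖v‖²)² + 4⟨u,v⟩² ) ) / 2 ). -/
/-!
The quantity `|⟨c,u⟩ + i⟨c,v⟩|² = ⟨c,u⟩² + ⟨c,v⟩²` is the quadratic form of `u uᵀ + v vᵀ`, whose
nonzero eigenvalues are those of the Gram matrix `G = !![‖u‖², ⟨u,v⟩; ⟨u,v⟩, ‖v‖²]`; the right-hand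
side is the square root of the largest eigenvalue `λ₊` of `G`. For the upper bound put
`p = ⟨c,u⟩`, `q = ⟨c,v⟩` and `w = p u + q v`: then `p² + q² = ⟨c,w⟩ ≤ ‖c‖ ‖w‖`, while
`‖w‖² = (p,q) G (p,q)ᵀ ≤ λ₊ (p² + q²)`. The bound is attained at `c = w / ‖w‖` when `(p,q)` is an
eigenvector of `G` for `λ₊`.
-/

open scoped RealInnerProductSpace

/-- The largest eigenvalue of the symmetric matrix `!![a, d; d, b]`. -/
noncomputable def maxEigenvalueSym2 (a b d : ℝ) : ℝ := (a + b + √((a - b) ^ 2 + 4 * d ^ 2)) / 2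

theorem quadForm_nonneg_of_mul_eq_sq {α β d : ℝ} (hα : 0 ≤ α) (hβ : 0 ≤ β) (h : α * β = d ^ 2)
    (p q : ℝ) : 0 ≤ α * p ^ 2 - 2 * d * p * q + β * q ^ 2 := by
  rcases (add_nonneg hα hβ).eq_or_lt with hsum | hsum
  · obtain ⟨rfl, rfl⟩ : α = 0 ∧ β = 0 := ⟨by linarith, by linarith⟩
    obtain rfl : d = 0 := pow_eq_zero_iff two_ne_zero |>.mp (by linarith)
    simp
  · -- `(α + β) (α p² - 2 d p q + β q²)` is a sum of two squares because `α β = d²`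
    have key : (α + β) * (α * p ^ 2 - 2 * d * p * q + β * q ^ 2) =
        (α * p - d * q) ^ 2 + (d * p - β * q) ^ 2 := by
      linear_combination (p ^ 2 + q ^ 2) * h
    exact nonneg_of_mul_nonneg_right (key ▸ by positivity) hsum

section Sym2

variable (a b d : ℝ)

local notation "λ₊" => maxEigenvalueSym2 a b d

theorem maxEigenvalueSym2_sub_mul_sub : (λ₊ - a) * (λ₊ - b) = d ^ 2 := by
  have hs := Real.sq_sqrt (by positivity : 0 ≤ (a - b) ^ 2 + 4 * d ^ 2)
  unfold maxEigenvalueSym2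
  linear_combination hs / 4

theorem le_maxEigenvalueSym2_left : a ≤ λ₊ := by
  have := Real.le_sqrt_of_sq_le (le_add_of_nonneg_right (by positivity) :
    (a - b) ^ 2 ≤ (a - b) ^ 2 + 4 * d ^ 2)
  unfold maxEigenvalueSym2; linarith

theorem le_maxEigenvalueSym2_right : b ≤ λ₊ := by
  have := Real.neg_sqrt_le_of_sq_le (le_add_of_nonneg_right (by positivity) :
    (a - b) ^ 2 ≤ (a - b) ^ 2 + 4 * d ^ 2)
  unfold maxEigenvalueSym2; linarith

theorem quadForm_le_maxEigenvalueSym2 (p q : ℝ) :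
    a * p ^ 2 + 2 * d * p * q + b * q ^ 2 ≤ λ₊ * (p ^ 2 + q ^ 2) := by
  have := quadForm_nonneg_of_mul_eq_sq (sub_nonneg.mpr (le_maxEigenvalueSym2_left a b d))
    (sub_nonneg.mpr (le_maxEigenvalueSym2_right a b d)) (maxEigenvalueSym2_sub_mul_sub a b d) p q
  linarith

theorem exists_eigenvector_maxEigenvalueSym2 :
    ∃ p q : ℝ, (p ≠ 0 ∨ q ≠ 0) ∧ a * p + d * q = λ₊ * p ∧ d * p + b * q = λ₊ * q := by
  by_cases h : d = 0 ∧ λ₊ = a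
  · obtain ⟨hd, ha⟩ := h
    exact ⟨1, 0, by simp, by rw [ha, hd]; ring, by rw [hd]; ring⟩
  · refine ⟨d, λ₊ - a, ?_, by ring, by linear_combination -maxEigenvalueSym2_sub_mul_sub a b d⟩
    rwa [sub_ne_zero, ← not_and_or]

end Sym2

section InnerProductSpace

variable {E : Type*} [NormedAddCommGroup E] [InnerProductSpace ℝ E] (u v : E)

local notation "λ₊" => maxEigenvalueSym2 (‖u‖ ^ 2) (‖v‖ ^ 2) ⟪u, v⟫

theorem maxEigenvalueSym2_gram_nonneg : 0 ≤ λ₊ :=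
  (sq_nonneg _).trans (le_maxEigenvalueSym2_left _ _ _)

theorem norm_smul_add_smul_sq (p q : ℝ) :
    ‖p • u + q • v‖ ^ 2 = ‖u‖ ^ 2 * p ^ 2 + 2 * ⟪u, v⟫ * p * q + ‖v‖ ^ 2 * q ^ 2 := by
  rw [norm_add_sq_real, norm_smul, norm_smul, real_inner_smul_left, real_inner_smul_right,
    Real.norm_eq_abs, Real.norm_eq_abs, mul_pow, mul_pow, sq_abs, sq_abs]
  ring

theorem inner_sq_add_inner_sq_le (c : E) : ⟪c, u⟫ ^ 2 + ⟪c, v⟫ ^ 2 ≤ λ₊ * ‖c‖ ^ 2 := by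
  set p := ⟪c, u⟫
  set q := ⟪c, v⟫
  set w := p • u + q • v
  have hcw : p ^ 2 + q ^ 2 ≤ ‖c‖ * ‖w‖ :=
    calc p ^ 2 + q ^ 2 = ⟪c, w⟫ := by
          rw [inner_add_right, real_inner_smul_right, real_inner_smul_right]; ring
      _ ≤ ‖c‖ * ‖w‖ := real_inner_le_norm c w
  have hw : ‖w‖ ^ 2 ≤ λ₊ * (p ^ 2 + q ^ 2) :=
    norm_smul_add_smul_sq u v p q ▸ quadForm_le_maxEigenvalueSym2 _ _ _ p q
  have hsq : (p ^ 2 + q ^ 2) * (p ^ 2 + q ^ 2) ≤ (λ₊ * ‖c‖ ^ 2) * (p ^ 2 + q ^ 2) :=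
    calc (p ^ 2 + q ^ 2) * (p ^ 2 + q ^ 2) ≤ (‖c‖ * ‖w‖) * (‖c‖ * ‖w‖) :=
          mul_self_le_mul_self (by positivity) hcw
      _ = ‖c‖ ^ 2 * ‖w‖ ^ 2 := by ring
      _ ≤ ‖c‖ ^ 2 * (λ₊ * (p ^ 2 + q ^ 2)) := mul_le_mul_of_nonneg_left hw (by positivity)
      _ = (λ₊ * ‖c‖ ^ 2) * (p ^ 2 + q ^ 2) := by ring
  rcases (by positivity : 0 ≤ p ^ 2 + q ^ 2).eq_or_lt with h | h
  · rw [← h]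
    exact mul_nonneg (maxEigenvalueSym2_gram_nonneg u v) (by positivity)
  · exact le_of_mul_le_mul_right hsq h

theorem exists_norm_eq_one_inner_sq_add_inner_sq_eq (hpos : 0 < λ₊) :
    ∃ c : E, ‖c‖ = 1 ∧ ⟪c, u⟫ ^ 2 + ⟪c, v⟫ ^ 2 = λ₊ := by
  obtain ⟨p, q, hpq, hu, hv⟩ := exists_eigenvector_maxEigenvalueSym2 (‖u‖ ^ 2) (‖v‖ ^ 2) ⟪u, v⟫
  set w := p • u + q • v
  have hwu : ⟪w, u⟫ = λ₊ * p := by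
    rw [inner_add_left, real_inner_smul_left, real_inner_smul_left, real_inner_self_eq_norm_sq,
      real_inner_comm]
    linear_combination hu
  have hwv : ⟪w, v⟫ = λ₊ * q := by
    rw [inner_add_left, real_inner_smul_left, real_inner_smul_left, real_inner_self_eq_norm_sq]
    linear_combination hv
  have hw : ‖w‖ ^ 2 = λ₊ * (p ^ 2 + q ^ 2) :=
    calc ‖w‖ ^ 2 = ⟪w, p • u + q • v⟫ := (real_inner_self_eq_norm_sq w).symm
      _ = p * ⟪w, u⟫ + q * ⟪w, v⟫ := by
          rw [inner_add_right, real_inner_smul_right, real_inner_smul_right]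
      _ = λ₊ * (p ^ 2 + q ^ 2) := by rw [hwu, hwv]; ring
  have hw0 : ‖w‖ ≠ 0 := by
    have : 0 < p ^ 2 + q ^ 2 := by rcases hpq with h | h <;> positivity
    exact pow_ne_zero_iff two_ne_zero |>.mp (hw ▸ (mul_pos hpos this).ne')
  refine ⟨‖w‖⁻¹ • w, by rw [norm_smul, norm_inv, norm_norm, inv_mul_cancel₀ hw0], ?_⟩
  rw [real_inner_smul_left, real_inner_smul_left, hwu, hwv]
  field_simp
  linear_combination -hw

theorem sSup_sqrt_inner_sq_add_inner_sq :
    sSup {r : ℝ | ∃ c : E, ‖c‖ = 1 ∧ r = √(⟪c, u⟫ ^ 2 + ⟪c, v⟫ ^ 2)} = √λ₊ := by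
  have hle : ∀ r ∈ {r : ℝ | ∃ c : E, ‖c‖ = 1 ∧ r = √(⟪c, u⟫ ^ 2 + ⟪c, v⟫ ^ 2)}, r ≤ √λ₊ := by
    rintro r ⟨c, hc, rfl⟩
    simpa [hc] using Real.sqrt_le_sqrt (inner_sq_add_inner_sq_le u v c)
  refine le_antisymm (Real.sSup_le hle (Real.sqrt_nonneg _)) ?_
  rcases (maxEigenvalueSym2_gram_nonneg u v).eq_or_lt with h0 | hpos
  · -- the set is empty when `E` is trivial; then both sides are `0` since `sSup ∅ = 0`
    rw [← h0, Real.sqrt_zero]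
    exact Real.sSup_nonneg (by rintro r ⟨c, -, rfl⟩; exact Real.sqrt_nonneg _)
  · obtain ⟨c, hc, hc_eq⟩ := exists_norm_eq_one_inner_sq_add_inner_sq_eq u v hpos
    exact le_csSup ⟨_, hle⟩ ⟨c, hc, by rw [hc_eq]⟩

end InnerProductSpace

theorem stmt0_general (M : ℕ) (u v : EuclideanSpace ℝ (Fin M)) :
    sSup {r : ℝ | ∃ c : EuclideanSpace ℝ (Fin M), ‖c‖ = 1 ∧
        r = ‖((inner ℝ c u : ℝ) : ℂ) + Complex.I * ((inner ℝ c v : ℝ) : ℂ)‖}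
      = Real.sqrt ((‖u‖ ^ 2 + ‖v‖ ^ 2 +
          Real.sqrt ((‖u‖ ^ 2 - ‖v‖ ^ 2) ^ 2 + 4 * (inner ℝ u v : ℝ) ^ 2)) / 2) := by
  simp only [mul_comm Complex.I, Complex.norm_add_mul_I]
  exact sSup_sqrt_inner_sq_add_inner_sq u v

/-- For `M ≥ 1` and `u, v ∈ ℝ^M`, the supremum over unit vectors `c` of
`|⟨c,u⟩ + i⟨c,v⟩|` equals
`sqrt(((‖u‖² + ‖v‖²) + sqrt((‖u‖² − ‖v‖²)² + 4⟨u,v⟩²)) / 2)`. -/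
theorem stmt0 (M : ℕ) (hM : 1 ≤ M) (u v : EuclideanSpace ℝ (Fin M)) :
    sSup {r : ℝ | ∃ c : EuclideanSpace ℝ (Fin M), ‖c‖ = 1 ∧
        r = ‖((inner ℝ c u : ℝ) : ℂ) + Complex.I * ((inner ℝ c v : ℝ) : ℂ)‖}
      = Real.sqrt ((‖u‖ ^ 2 + ‖v‖ ^ 2 +
          Real.sqrt ((‖u‖ ^ 2 - ‖v‖ ^ 2) ^ 2 + 4 * (inner ℝ u v : ℝ) ^ 2)) / 2) :=
  stmt0_general M u v
end

section
/- Let m, n ≥ 1 and let X be a Hermitian complex matrix indexed by (Fin m × Fin n) × (Fin m × Fin n). Define the partial trace Y, an m×m complex matrix, by Y(i,j) = Σ_{k ∈ Fin n} X((i,k),(j,k)); then Y is Hermitian. The supremum, over all nonzero Hermitian m×m complex matrices A, of |tr((A ⊗ I_n) · X)| / ‖A‖_op equals the sum Σ_i |λ_i(Y)| of the absolute values of the eigenvalues of Y (i.e., the trace norm of Y). -/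
/-!
Tracing out the second factor gives `tr((A ⊗ I) X) = tr(A Y)`. Diagonalising `Y = U Λ U*`,
`tr(A Y) = Σᵢ λᵢ (U* A U)ᵢᵢ`, and every entry of a matrix is bounded by its operator norm, so
`|tr(A Y)| ≤ ‖A‖ Σᵢ |λᵢ|`. Equality is attained at the Hermitian unitary `U sign(Λ) U*`.
-/

open Matrix Kronecker

namespace Matrix

section PartialTrace

variable {R m n : Type*} [Fintype n]

def partialTraceRight [AddCommMonoid R] (X : Matrix (m × n) (m × n) R) : Matrix m m R :=
  of fun i j => ∑ k, X (i, k) (j, k)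

lemma IsHermitian.partialTraceRight [AddCommMonoid R] [StarAddMonoid R]
    {X : Matrix (m × n) (m × n) R} (hX : X.IsHermitian) : X.partialTraceRight.IsHermitian :=
  IsHermitian.ext fun i j => by
    simp only [Matrix.partialTraceRight, of_apply, star_sum, hX.apply]

lemma trace_kronecker_one_mul [Fintype m] [Semiring R] [DecidableEq n] (A : Matrix m m R)
    (X : Matrix (m × n) (m × n) R) :
    ((A ⊗ₖ (1 : Matrix n n R)) * X).trace = (A * X.partialTraceRight).trace := by
  simp only [trace, diag, mul_apply, partialTraceRight, of_apply, Fintype.sum_prod_type,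
    kroneckerMap_apply, one_apply, mul_ite, mul_one, mul_zero, ite_mul, zero_mul,
    Finset.sum_ite_eq, Finset.mem_univ, if_true, Finset.mul_sum]
  exact Finset.sum_congr rfl fun i _ => Finset.sum_comm

end PartialTrace

lemma trace_mul_mul_diagonal_mul {R n : Type*} [CommSemiring R] [Fintype n] [DecidableEq n]
    (A U V : Matrix n n R) (d : n → R) :
    (A * (U * diagonal d * V)).trace = ∑ i, (V * A * U) i i * d i := by
  rw [← Matrix.mul_assoc, trace_mul_cycle, ← Matrix.mul_assoc]
  simp [trace, mul_diagonal]

section L2OpNorm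

open scoped Norms.L2Operator

variable {𝕜 : Type*} [RCLike 𝕜] {n : Type*} [Fintype n] [DecidableEq n]

lemma norm_apply_le_l2_opNorm {m : Type*} [Fintype m] (A : Matrix m n 𝕜) (i : m) (j : n) :
    ‖A i j‖ ≤ ‖A‖ := by
  have h := A.l2_opNorm_mulVec (WithLp.toLp 2 (Pi.single j 1))
  calc ‖A i j‖ = ‖(EuclideanSpace.equiv m 𝕜).symm (A *ᵥ Pi.single j 1) i‖ := by simp
    _ ≤ ‖(EuclideanSpace.equiv m 𝕜).symm (A *ᵥ Pi.single j 1)‖ := PiLp.norm_apply_le _ _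
    _ ≤ ‖A‖ := by simpa using h

namespace IsHermitian

variable {Y : Matrix n n 𝕜} (hY : Y.IsHermitian)

lemma eq_eigenvectorUnitary_mul_diagonal_mul_star :
    Y = (hY.eigenvectorUnitary : Matrix n n 𝕜) * diagonal (fun i => (hY.eigenvalues i : 𝕜)) *
      star (hY.eigenvectorUnitary : Matrix n n 𝕜) :=
  hY.spectral_theorem.trans (by rw [Unitary.conjStarAlgAut_apply]; rfl)

lemma trace_mul_eq_sum (A : Matrix n n 𝕜) :
    (A * Y).trace = ∑ i, (star (hY.eigenvectorUnitary : Matrix n n 𝕜) * A *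
      (hY.eigenvectorUnitary : Matrix n n 𝕜)) i i * hY.eigenvalues i := by
  conv_lhs => rw [hY.eq_eigenvectorUnitary_mul_diagonal_mul_star]
  exact trace_mul_mul_diagonal_mul ..

lemma norm_trace_mul_le (A : Matrix n n 𝕜) :
    ‖(A * Y).trace‖ ≤ ‖A‖ * ∑ i, |hY.eigenvalues i| := by
  set U : Matrix n n 𝕜 := ↑hY.eigenvectorUnitary
  have hdiag (i : n) : ‖(star U * A * U) i i‖ ≤ ‖A‖ := by
    simpa [U, ← Unitary.coe_star] using norm_apply_le_l2_opNorm (star U * A * U) i i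
  rw [hY.trace_mul_eq_sum, Finset.mul_sum]
  refine (norm_sum_le _ _).trans (Finset.sum_le_sum fun i _ => ?_)
  rw [norm_mul, RCLike.norm_ofReal]
  exact mul_le_mul_of_nonneg_right (hdiag i) (abs_nonneg _)

-- The sign of a zero eigenvalue is taken to be `1`, so that `signMatrix` is unitary.
noncomputable def eigenvalueSigns (i : n) : ℝ := if 0 ≤ hY.eigenvalues i then 1 else -1

lemma eigenvalueSigns_mul_self (i : n) : hY.eigenvalueSigns i * hY.eigenvalueSigns i = 1 := by
  unfold eigenvalueSigns; split_ifs <;> norm_num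

lemma eigenvalueSigns_mul_eigenvalues (i : n) :
    hY.eigenvalueSigns i * hY.eigenvalues i = |hY.eigenvalues i| := by
  unfold eigenvalueSigns; split_ifs with h
  · simp [abs_of_nonneg h]
  · simp [abs_of_neg (not_le.mp h)]

noncomputable def signMatrix : Matrix n n 𝕜 :=
  (hY.eigenvectorUnitary : Matrix n n 𝕜) * diagonal (fun i => (hY.eigenvalueSigns i : 𝕜)) *
    star (hY.eigenvectorUnitary : Matrix n n 𝕜)

lemma isHermitian_signMatrix : hY.signMatrix.IsHermitian :=
  isHermitian_mul_mul_conjTranspose _ <|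
    isHermitian_diagonal_iff.mpr fun _ => isSelfAdjoint_iff.mpr (RCLike.conj_ofReal _)

lemma star_eigenvectorUnitary_mul_signMatrix_mul :
    star (hY.eigenvectorUnitary : Matrix n n 𝕜) * hY.signMatrix * hY.eigenvectorUnitary =
      diagonal (fun i => (hY.eigenvalueSigns i : 𝕜)) := by
  have hU := Unitary.coe_star_mul_self hY.eigenvectorUnitary
  simp only [signMatrix, ← Matrix.mul_assoc, hU, one_mul]
  simp only [Matrix.mul_assoc, hU, mul_one]

lemma signMatrix_mem_unitary : hY.signMatrix ∈ unitary (Matrix n n 𝕜) := by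
  set U : Matrix n n 𝕜 := ↑hY.eigenvectorUnitary
  set D : Matrix n n 𝕜 := diagonal fun i => (hY.eigenvalueSigns i : 𝕜)
  have hU : star U * U = 1 := Unitary.star_mul_self_of_mem hY.eigenvectorUnitary.2
  have hU' : U * star U = 1 := Unitary.mul_star_self_of_mem hY.eigenvectorUnitary.2
  have hD : D * D = 1 := by
    rw [diagonal_mul_diagonal, ← diagonal_one]
    exact congrArg diagonal (funext fun i => mod_cast hY.eigenvalueSigns_mul_self i)
  refine mem_unitaryGroup_iff'.mpr ?_
  calc star hY.signMatrix * hY.signMatrix = U * (D * (star U * U) * D) * star U := by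
        rw [hY.isHermitian_signMatrix.star_eq]
        simp only [signMatrix, U, D, Matrix.mul_assoc]
    _ = 1 := by rw [hU, mul_one, hD, mul_one, hU']

lemma trace_signMatrix_mul :
    (hY.signMatrix * Y).trace = ∑ i, ((|hY.eigenvalues i| : ℝ) : 𝕜) := by
  rw [hY.trace_mul_eq_sum, star_eigenvectorUnitary_mul_signMatrix_mul]
  refine Finset.sum_congr rfl fun i _ => ?_
  rw [diagonal_apply_eq, ← RCLike.ofReal_mul, eigenvalueSigns_mul_eigenvalues]

lemma isGreatest_norm_trace_mul_div_norm [Nonempty n] :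
    IsGreatest {r : ℝ | ∃ A : Matrix n n 𝕜, A.IsHermitian ∧ A ≠ 0 ∧
        r = ‖(A * Y).trace‖ / ‖toEuclideanCLM (𝕜 := 𝕜) A‖} (∑ i, |hY.eigenvalues i|) := by
  have hnorm : ‖hY.signMatrix‖ = 1 := CStarRing.norm_of_mem_unitary hY.signMatrix_mem_unitary
  refine ⟨⟨hY.signMatrix, hY.isHermitian_signMatrix, norm_ne_zero_iff.mp (by simp [hnorm]), ?_⟩, ?_⟩
  · rw [← cstar_norm_def, hnorm, div_one, trace_signMatrix_mul, ← RCLike.ofReal_sum,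
      RCLike.norm_ofReal, abs_of_nonneg (Finset.sum_nonneg fun i _ => abs_nonneg _)]
  · rintro r ⟨A, -, hA, rfl⟩
    rw [← cstar_norm_def]
    exact div_le_of_le_mul₀ (norm_nonneg _) (Finset.sum_nonneg fun i _ => abs_nonneg _)
      ((hY.norm_trace_mul_le A).trans_eq (mul_comm _ _))

lemma sSup_norm_trace_mul_div_norm :
    sSup {r : ℝ | ∃ A : Matrix n n 𝕜, A.IsHermitian ∧ A ≠ 0 ∧
        r = ‖(A * Y).trace‖ / ‖toEuclideanCLM (𝕜 := 𝕜) A‖} = ∑ i, |hY.eigenvalues i| := by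
  cases isEmpty_or_nonempty n
  · have hempty : {r : ℝ | ∃ A : Matrix n n 𝕜, A.IsHermitian ∧ A ≠ 0 ∧
        r = ‖(A * Y).trace‖ / ‖toEuclideanCLM (𝕜 := 𝕜) A‖} = ∅ :=
      Set.eq_empty_of_forall_notMem fun _ ⟨A, _, hA, _⟩ => hA (Subsingleton.elim A 0)
    rw [hempty, Real.sSup_empty, Finset.univ_eq_empty, Finset.sum_empty]
  · exact hY.isGreatest_norm_trace_mul_div_norm.csSup_eq

end IsHermitian

end L2OpNorm

end Matrix

theorem stmt3_general (m n : ℕ)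
    (X : Matrix (Fin m × Fin n) (Fin m × Fin n) ℂ) (hX : X.IsHermitian)
    (Y : Matrix (Fin m) (Fin m) ℂ)
    (hY : ∀ i j, Y i j = ∑ k : Fin n, X (i, k) (j, k)) :
    ∃ hHerm : Y.IsHermitian,
      sSup {r : ℝ | ∃ A : Matrix (Fin m) (Fin m) ℂ, A.IsHermitian ∧ A ≠ 0 ∧
          r = ‖((A ⊗ₖ (1 : Matrix (Fin n) (Fin n) ℂ)) * X).trace‖ /
              ‖Matrix.toEuclideanCLM (𝕜 := ℂ) A‖}
        = ∑ i, |hHerm.eigenvalues i| := by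
  obtain rfl : Y = X.partialTraceRight := Matrix.ext hY
  refine ⟨hX.partialTraceRight, ?_⟩
  simp_rw [trace_kronecker_one_mul]
  exact hX.partialTraceRight.sSup_norm_trace_mul_div_norm

/-- The seminorm relative to the subsystem algebra `L(H_S) ⊗ id` equals the trace norm
of the partial trace: for Hermitian `X` on `H_S ⊗ H_{S^c}`, with `Y` the partial trace
of `X` over the second factor, `Y` is Hermitian and
`sup_{A Hermitian, A ≠ 0} |tr((A ⊗ I) X)| / ‖A‖_op = Σᵢ |λᵢ(Y)|`. -/
theorem stmt3 (m n : ℕ) (hm : 1 ≤ m) (hn : 1 ≤ n)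
    (X : Matrix (Fin m × Fin n) (Fin m × Fin n) ℂ) (hX : X.IsHermitian)
    (Y : Matrix (Fin m) (Fin m) ℂ)
    (hY : ∀ i j, Y i j = ∑ k : Fin n, X (i, k) (j, k)) :
    ∃ hHerm : Y.IsHermitian,
      sSup {r : ℝ | ∃ A : Matrix (Fin m) (Fin m) ℂ, A.IsHermitian ∧ A ≠ 0 ∧
          r = ‖((A ⊗ₖ (1 : Matrix (Fin n) (Fin n) ℂ)) * X).trace‖ /
              ‖Matrix.toEuclideanCLM (𝕜 := ℂ) A‖}
        = ∑ i, |hHerm.eigenvalues i| :=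
  stmt3_general m n X hX Y hY
end

section
/- Let 𝒜 be a nonempty set of nonzero Hermitian D×D complex matrices, let X be a Hermitian D×D complex matrix whose eigenvalues λ_i(X) satisfy Σ_i |λ_i(X)| ≤ 2, and let n ≥ 1 be an integer. Define F(U) = sup_{A ∈ 𝒜} |tr(A U X Uᴴ)| / ‖A‖_op. Then for all unitary D×D matrices U₁, U₂: |F(U₁)ⁿ − F(U₂)ⁿ| ≤ n · 2^{n + 1/2} · ‖U₁ − U₂‖_F. -/
/-!
Diagonalise `X = V diag(λ) Vᴴ`; then `tr(A U X Uᴴ) = Σᵢ λᵢ ⟪bᵢ, A bᵢ⟫` with `bᵢ` the columns of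
`U V`. For unit vectors `b, c`, after a phase rotation making `⟪b, c⟫` real and nonnegative, the
polarisation identity `2(⟪b, A b⟫ - ⟪c, A c⟫) = ⟪b + c, A (b - c)⟫ + ⟪b - c, A (b + c)⟫` gives
`|⟪b, A b⟫ - ⟪c, A c⟫| ≤ 2 ‖A‖ √(1 - |⟪b, c⟫|²)`. For the unitary `P = (U₁V)ᴴ (U₂V)` the unit
row and column sums of `|Pᵢⱼ|²` give `1 - |Pᵢᵢ|² ≤ Σⱼ (1 - |Pⱼⱼ|) ≤ ‖U₁ - U₂‖_F² / 2`. Hence each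
ratio `|tr(A U X Uᴴ)| / ‖A‖` lies in `[0, 2]` and is `2√2`-Lipschitz in `U` for the Frobenius
norm, so is their supremum `F`, and `|aⁿ - bⁿ| ≤ n 2ⁿ⁻¹ |a - b|` on `[0, 2]`.
-/

open Matrix WithLp

open scoped InnerProductSpace ComplexConjugate

section InnerProduct

variable {E : Type*} [NormedAddCommGroup E] [InnerProductSpace ℂ E]

lemma norm_inner_apply_le (T : E →L[ℂ] E) (x y : E) : ‖⟪x, T y⟫_ℂ‖ ≤ ‖T‖ * ‖x‖ * ‖y‖ :=
  calc ‖⟪x, T y⟫_ℂ‖ ≤ ‖x‖ * ‖T y‖ := norm_inner_le_norm _ _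
    _ ≤ ‖x‖ * (‖T‖ * ‖y‖) := by gcongr; exact T.le_opNorm y
    _ = ‖T‖ * ‖x‖ * ‖y‖ := by ring

lemma norm_inner_self_sub_le_of_inner_eq_ofReal (T : E →L[ℂ] E) {x y : E} (hx : ‖x‖ = 1)
    (hy : ‖y‖ = 1) {c : ℝ} (hxy : ⟪x, y⟫_ℂ = c) :
    ‖⟪x, T x⟫_ℂ - ⟪y, T y⟫_ℂ‖ ≤ 2 * ‖T‖ * √(1 - c ^ 2) := by
  have hpolar : 2 * (⟪x, T x⟫_ℂ - ⟪y, T y⟫_ℂ) = ⟪x + y, T (x - y)⟫_ℂ + ⟪x - y, T (x + y)⟫_ℂ := by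
    simp only [map_add, map_sub, inner_add_left, inner_sub_left, inner_add_right,
      inner_sub_right]
    ring
  have hre : RCLike.re ⟪x, y⟫_ℂ = c := by simp [hxy]
  have hadd : ‖x + y‖ ^ 2 = 2 + 2 * c := by
    rw [@norm_add_sq ℂ, hre, hx, hy]; ring
  have hsub : ‖x - y‖ ^ 2 = 2 - 2 * c := by
    rw [@norm_sub_sq ℂ, hre, hx, hy]; ring
  have hprod : ‖x + y‖ * ‖x - y‖ = 2 * √(1 - c ^ 2) := by
    rw [← Real.sqrt_sq (by positivity : 0 ≤ ‖x + y‖ * ‖x - y‖), mul_pow, hadd, hsub,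
      show (2 + 2 * c) * (2 - 2 * c) = 2 ^ 2 * (1 - c ^ 2) by ring,
      Real.sqrt_mul (by norm_num), Real.sqrt_sq (by norm_num)]
  have hsum := (norm_add_le _ _).trans
    (add_le_add (norm_inner_apply_le T (x + y) (x - y)) (norm_inner_apply_le T (x - y) (x + y)))
  rw [← hpolar, norm_mul, Complex.norm_two] at hsum
  nlinarith [norm_nonneg T]

lemma norm_inner_self_sub_le (T : E →L[ℂ] E) {x y : E} (hx : ‖x‖ = 1) (hy : ‖y‖ = 1) :
    ‖⟪x, T x⟫_ℂ - ⟪y, T y⟫_ℂ‖ ≤ 2 * ‖T‖ * √(1 - ‖⟪x, y⟫_ℂ‖ ^ 2) := by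
  -- rotating `y` by a phase makes `⟪x, y⟫` real without changing `⟪y, T y⟫`
  set ω : ℂ := Complex.exp (↑(-Complex.arg ⟪x, y⟫_ℂ) * Complex.I)
  have hω : ‖ω‖ = 1 := Complex.norm_exp_ofReal_mul_I _
  have hωω : conj ω * ω = 1 := by
    rw [Complex.conj_mul', hω]; norm_num
  have hinner : ⟪x, ω • y⟫_ℂ = (‖⟪x, y⟫_ℂ‖ : ℂ) := by
    conv_lhs => rw [inner_smul_right, ← Complex.norm_mul_exp_arg_mul_I ⟪x, y⟫_ℂ]
    rw [mul_left_comm, ← Complex.exp_add]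
    simp
  have hT : ⟪ω • y, T (ω • y)⟫_ℂ = ⟪y, T y⟫_ℂ := by
    rw [map_smul, inner_smul_left, inner_smul_right, ← mul_assoc, hωω, one_mul]
  have hy' : ‖ω • y‖ = 1 := by rw [norm_smul, hω, hy, one_mul]
  have := norm_inner_self_sub_le_of_inner_eq_ofReal T hx hy' hinner
  rwa [hT] at this

end InnerProduct

lemma sSup_image_le_sSup_image_add {α : Type*} {s : Set α} {f g : α → ℝ} {c : ℝ}
    (hg : BddAbove (g '' s)) (hg₀ : ∀ a ∈ s, 0 ≤ g a) (hc : 0 ≤ c)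
    (hfg : ∀ a ∈ s, f a ≤ g a + c) : sSup (f '' s) ≤ sSup (g '' s) + c :=
  Real.sSup_le (Set.forall_mem_image.2 fun a ha =>
      (hfg a ha).trans (add_le_add_left (le_csSup hg (Set.mem_image_of_mem g ha)) c))
    (add_nonneg (Real.sSup_nonneg (Set.forall_mem_image.2 hg₀)) hc)

lemma abs_sSup_image_sub_sSup_image_le {α : Type*} {s : Set α} {f g : α → ℝ} {M c : ℝ}
    (hf : ∀ a ∈ s, f a ∈ Set.Icc 0 M) (hg : ∀ a ∈ s, g a ∈ Set.Icc 0 M) (hc : 0 ≤ c)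
    (hfg : ∀ a ∈ s, |f a - g a| ≤ c) : |sSup (f '' s) - sSup (g '' s)| ≤ c := by
  have hbdd : ∀ h : α → ℝ, (∀ a ∈ s, h a ∈ Set.Icc 0 M) → BddAbove (h '' s) :=
    fun h hh => ⟨M, Set.forall_mem_image.2 fun a ha => (hh a ha).2⟩
  have hf' := sSup_image_le_sSup_image_add (f := f) (hbdd g hg) (fun a ha => (hg a ha).1) hc
    fun a ha => by linarith [(abs_le.1 (hfg a ha)).2]
  have hg' := sSup_image_le_sSup_image_add (f := g) (hbdd f hf) (fun a ha => (hf a ha).1) hc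
    fun a ha => by linarith [(abs_le.1 (hfg a ha)).1]
  exact abs_sub_le_iff.2 ⟨by linarith, by linarith⟩

lemma sSup_image_mem_Icc {α : Type*} {s : Set α} {f : α → ℝ} {M : ℝ} (hM : 0 ≤ M)
    (hf : ∀ a ∈ s, f a ∈ Set.Icc 0 M) : sSup (f '' s) ∈ Set.Icc 0 M :=
  ⟨Real.sSup_nonneg (Set.forall_mem_image.2 fun a ha => (hf a ha).1),
    Real.sSup_le (Set.forall_mem_image.2 fun a ha => (hf a ha).2) hM⟩

lemma abs_pow_succ_sub_pow_succ_le {a b M : ℝ} (ha : a ∈ Set.Icc 0 M) (hb : b ∈ Set.Icc 0 M)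
    (m : ℕ) :
    |a ^ (m + 1) - b ^ (m + 1)| ≤ (m + 1) * M ^ m * |a - b| := by
  have hmax : max |a| |b| ≤ M := by
    rw [abs_of_nonneg ha.1, abs_of_nonneg hb.1]; exact max_le ha.2 hb.2
  calc |a ^ (m + 1) - b ^ (m + 1)| ≤ |a - b| * (m + 1 : ℕ) * max |a| |b| ^ m :=
        abs_pow_sub_pow_le a b (m + 1)
    _ ≤ |a - b| * (m + 1 : ℕ) * M ^ m := by gcongr
    _ = (m + 1) * M ^ m * |a - b| := by push_cast; ring

section Matrix

variable {n : Type*} [Fintype n]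

lemma conjTranspose_mul_self_apply (M : Matrix n n ℂ) (j : n) :
    (Mᴴ * M) j j = ((∑ i, ‖M i j‖ ^ 2 : ℝ) : ℂ) := by
  simp [mul_apply, Complex.conj_mul']

lemma trace_conjTranspose_mul_self (M : Matrix n n ℂ) :
    (Mᴴ * M).trace = ((∑ i, ∑ j, ‖M i j‖ ^ 2 : ℝ) : ℂ) := by
  rw [Finset.sum_comm]
  simp [trace, conjTranspose_mul_self_apply]

variable [DecidableEq n]

lemma trace_mul_diagonal (M : Matrix n n ℂ) (d : n → ℂ) :
    (M * diagonal d).trace = ∑ i, d i * M i i := by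
  simp [trace, mul_comm]

lemma trace_mul_mul_conjTranspose_eq_sum_eigenvalues {X : Matrix n n ℂ} (hX : X.IsHermitian)
    (A U : Matrix n n ℂ) :
    (A * U * X * Uᴴ).trace =
      ∑ i, (hX.eigenvalues i : ℂ) * ((U * (hX.eigenvectorUnitary : Matrix n n ℂ))ᴴ * A *
        (U * (hX.eigenvectorUnitary : Matrix n n ℂ))) i i := by
  set B := U * (hX.eigenvectorUnitary : Matrix n n ℂ)
  have hAX : A * U * X * Uᴴ = A * B * diagonal (RCLike.ofReal ∘ hX.eigenvalues) * Bᴴ := by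
    conv_lhs => rw [hX.spectral_theorem]
    simp [B, Matrix.mul_assoc, conjTranspose_mul, star_eq_conjTranspose]
  rw [hAX, trace_mul_comm, ← Matrix.mul_assoc, ← Matrix.mul_assoc, trace_mul_diagonal]
  rfl

lemma conjTranspose_mul_mul_apply (B M C : Matrix n n ℂ) (i j : n) :
    (Bᴴ * M * C) i j = ⟪toLp 2 (B.col i), toEuclideanCLM (𝕜 := ℂ) M (toLp 2 (C.col j))⟫_ℂ := by
  simp [EuclideanSpace.inner_toLp_toLp, mul_apply, dotProduct, mulVec, Finset.sum_mul,
    Finset.mul_sum, mul_comm, mul_left_comm]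
  rw [Finset.sum_comm]
  simp only [mul_assoc]

lemma sum_norm_sq_col_of_mem_unitaryGroup {P : Matrix n n ℂ} (hP : P ∈ unitaryGroup n ℂ)
    (j : n) :
    ∑ i, ‖P i j‖ ^ 2 = 1 := by
  have := conjTranspose_mul_self_apply P j
  rw [← star_eq_conjTranspose, mem_unitaryGroup_iff'.mp hP] at this
  exact_mod_cast (by simpa using this.symm : ∑ i, (‖P i j‖ : ℂ) ^ 2 = 1)

lemma sum_norm_sq_row_of_mem_unitaryGroup {P : Matrix n n ℂ} (hP : P ∈ unitaryGroup n ℂ)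
    (i : n) :
    ∑ j, ‖P i j‖ ^ 2 = 1 := by
  simpa using sum_norm_sq_col_of_mem_unitaryGroup (Unitary.star_mem hP) i

lemma norm_toLp_col_of_mem_unitaryGroup {B : Matrix n n ℂ} (hB : B ∈ unitaryGroup n ℂ)
    (i : n) :
    ‖toLp 2 (B.col i)‖ = 1 := by
  simp [EuclideanSpace.norm_eq, sum_norm_sq_col_of_mem_unitaryGroup hB i]

lemma sum_norm_sq_mul_of_mem_unitaryGroup (M : Matrix n n ℂ) {V : Matrix n n ℂ}
    (hV : V ∈ unitaryGroup n ℂ) :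
    ∑ i, ∑ j, ‖(M * V) i j‖ ^ 2 = ∑ i, ∑ j, ‖M i j‖ ^ 2 := by
  have h : ((M * V)ᴴ * (M * V)).trace = (Mᴴ * M).trace := by
    have hVV : V * Vᴴ = 1 := mem_unitaryGroup_iff.mp hV
    rw [conjTranspose_mul, Matrix.mul_assoc, trace_mul_comm, Matrix.mul_assoc, Matrix.mul_assoc,
      hVV, Matrix.mul_one]
  rw [trace_conjTranspose_mul_self, trace_conjTranspose_mul_self] at h
  exact_mod_cast h

lemma sum_norm_sq_col_sub_of_mem_unitaryGroup {B₁ B₂ : Matrix n n ℂ}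
    (hB₁ : B₁ ∈ unitaryGroup n ℂ) (hB₂ : B₂ ∈ unitaryGroup n ℂ) (j : n) :
    ∑ i, ‖(B₁ - B₂) i j‖ ^ 2 = 2 - 2 * ((B₁ᴴ * B₂) j j).re := by
  have h := conjTranspose_mul_self_apply (B₁ - B₂) j
  have hexp : (B₁ - B₂)ᴴ * (B₁ - B₂) = B₁ᴴ * B₁ + B₂ᴴ * B₂ - (B₁ᴴ * B₂ + (B₁ᴴ * B₂)ᴴ) := by
    simp only [conjTranspose_sub, Matrix.sub_mul, Matrix.mul_sub, conjTranspose_mul,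
      conjTranspose_conjTranspose]
    abel
  have h₁ : B₁ᴴ * B₁ = 1 := mem_unitaryGroup_iff'.mp hB₁
  have h₂ : B₂ᴴ * B₂ = 1 := mem_unitaryGroup_iff'.mp hB₂
  rw [hexp, h₁, h₂, Matrix.sub_apply, Matrix.add_apply, Matrix.add_apply, conjTranspose_apply,
    one_apply_eq] at h
  have := congrArg Complex.re h
  simp only [Complex.sub_re, Complex.add_re, Complex.one_re, Complex.star_def, Complex.conj_re,
    Complex.ofReal_re] at this
  linarith

lemma one_sub_norm_sq_diag_le_of_mem_unitaryGroup {P : Matrix n n ℂ} (hP : P ∈ unitaryGroup n ℂ)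
    (i : n) : 1 - ‖P i i‖ ^ 2 ≤ ∑ j, (1 - ‖P j j‖) := by
  have hcol : ‖P i i‖ ^ 2 + ∑ j ∈ Finset.univ.erase i, ‖P j i‖ ^ 2 = 1 := by
    rw [Finset.add_sum_erase _ (fun j => ‖P j i‖ ^ 2) (Finset.mem_univ i),
      sum_norm_sq_col_of_mem_unitaryGroup hP]
  have hoff : ∀ j ∈ Finset.univ.erase i, ‖P j i‖ ^ 2 ≤ 1 - ‖P j j‖ ^ 2 := by
    intro j hj
    have hpair : ‖P j j‖ ^ 2 + ‖P j i‖ ^ 2 ≤ ∑ k, ‖P j k‖ ^ 2 := by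
      rw [← Finset.sum_pair (f := fun k => ‖P j k‖ ^ 2) (Finset.ne_of_mem_erase hj)]
      exact Finset.sum_le_sum_of_subset_of_nonneg (Finset.subset_univ _)
        fun _ _ _ => by positivity
    rw [sum_norm_sq_row_of_mem_unitaryGroup hP] at hpair
    linarith
  -- column `i` and the rows `j ≠ i` bound `1 - ‖P i i‖ ^ 2` twice over by `∑ j, (1 - ‖P j j‖ ^ 2)`
  have htwice : 2 * (1 - ‖P i i‖ ^ 2) ≤ ∑ j, (1 - ‖P j j‖ ^ 2) := by
    rw [← Finset.add_sum_erase _ (fun j => 1 - ‖P j j‖ ^ 2) (Finset.mem_univ i)]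
    linarith [Finset.sum_le_sum hoff]
  have hsq : ∑ j, (1 - ‖P j j‖ ^ 2) ≤ ∑ j, 2 * (1 - ‖P j j‖) :=
    Finset.sum_le_sum fun j _ => by nlinarith [sq_nonneg (1 - ‖P j j‖)]
  rw [← Finset.mul_sum] at hsq
  linarith

lemma one_sub_norm_sq_diag_le_half_sum_norm_sq_sub {B₁ B₂ : Matrix n n ℂ}
    (hB₁ : B₁ ∈ unitaryGroup n ℂ) (hB₂ : B₂ ∈ unitaryGroup n ℂ) (i : n) :
    1 - ‖(B₁ᴴ * B₂) i i‖ ^ 2 ≤ (∑ k, ∑ j, ‖(B₁ - B₂) k j‖ ^ 2) / 2 := by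
  have hP : B₁ᴴ * B₂ ∈ unitaryGroup n ℂ := mul_mem (Unitary.star_mem hB₁) hB₂
  have hre : ∑ j, (1 - ‖(B₁ᴴ * B₂) j j‖) ≤ ∑ j, (1 - ((B₁ᴴ * B₂) j j).re) :=
    Finset.sum_le_sum fun j _ => by linarith [Complex.re_le_norm ((B₁ᴴ * B₂) j j)]
  have hcols : ∑ j, (1 - ((B₁ᴴ * B₂) j j).re) = (∑ k, ∑ j, ‖(B₁ - B₂) k j‖ ^ 2) / 2 := by
    rw [Finset.sum_comm, Finset.sum_div]
    refine Finset.sum_congr rfl fun j _ => ?_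
    rw [sum_norm_sq_col_sub_of_mem_unitaryGroup hB₁ hB₂]
    ring
  linarith [one_sub_norm_sq_diag_le_of_mem_unitaryGroup hP i]

lemma norm_diag_conjTranspose_mul_mul_le (A : Matrix n n ℂ) {B : Matrix n n ℂ}
    (hB : B ∈ unitaryGroup n ℂ) (i : n) :
    ‖(Bᴴ * A * B) i i‖ ≤ ‖toEuclideanCLM (𝕜 := ℂ) A‖ := by
  simpa [conjTranspose_mul_mul_apply, norm_toLp_col_of_mem_unitaryGroup hB] using
    norm_inner_apply_le (toEuclideanCLM (𝕜 := ℂ) A) (toLp 2 (B.col i)) (toLp 2 (B.col i))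

lemma norm_diag_conjTranspose_mul_mul_sub_le (A : Matrix n n ℂ) {B₁ B₂ : Matrix n n ℂ}
    (hB₁ : B₁ ∈ unitaryGroup n ℂ) (hB₂ : B₂ ∈ unitaryGroup n ℂ) (i : n) :
    ‖(B₁ᴴ * A * B₁) i i - (B₂ᴴ * A * B₂) i i‖
      ≤ 2 * ‖toEuclideanCLM (𝕜 := ℂ) A‖ * √(1 - ‖(B₁ᴴ * B₂) i i‖ ^ 2) := by
  have hP : (B₁ᴴ * B₂) i i = ⟪toLp 2 (B₁.col i), toLp 2 (B₂.col i)⟫_ℂ := by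
    simpa using conjTranspose_mul_mul_apply B₁ 1 B₂ i i
  rw [conjTranspose_mul_mul_apply, conjTranspose_mul_mul_apply, hP]
  exact norm_inner_self_sub_le _ (norm_toLp_col_of_mem_unitaryGroup hB₁ i)
    (norm_toLp_col_of_mem_unitaryGroup hB₂ i)

lemma norm_trace_mul_mul_conjTranspose_le (A : Matrix n n ℂ) {X : Matrix n n ℂ}
    (hX : X.IsHermitian) {U : Matrix n n ℂ} (hU : U ∈ unitaryGroup n ℂ) :
    ‖(A * U * X * Uᴴ).trace‖ ≤ (∑ i, |hX.eigenvalues i|) * ‖toEuclideanCLM (𝕜 := ℂ) A‖ := by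
  have hB := mul_mem hU hX.eigenvectorUnitary.2
  rw [trace_mul_mul_conjTranspose_eq_sum_eigenvalues hX, Finset.sum_mul]
  refine (norm_sum_le _ _).trans (Finset.sum_le_sum fun i _ => ?_)
  rw [norm_mul, Complex.norm_real, Real.norm_eq_abs]
  exact mul_le_mul_of_nonneg_left (norm_diag_conjTranspose_mul_mul_le A hB i) (abs_nonneg _)

lemma norm_trace_mul_mul_conjTranspose_sub_le (A : Matrix n n ℂ) {X : Matrix n n ℂ}
    (hX : X.IsHermitian) {U₁ U₂ : Matrix n n ℂ} (hU₁ : U₁ ∈ unitaryGroup n ℂ)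
    (hU₂ : U₂ ∈ unitaryGroup n ℂ) :
    ‖(A * U₁ * X * U₁ᴴ).trace - (A * U₂ * X * U₂ᴴ).trace‖
      ≤ (∑ i, |hX.eigenvalues i|) * ‖toEuclideanCLM (𝕜 := ℂ) A‖ *
          (√2 * √(∑ i, ∑ j, ‖(U₁ - U₂) i j‖ ^ 2)) := by
  set V : Matrix n n ℂ := (hX.eigenvectorUnitary : Matrix n n ℂ)
  have hV : V ∈ unitaryGroup n ℂ := hX.eigenvectorUnitary.2
  set s := ∑ i, ∑ j, ‖(U₁ - U₂) i j‖ ^ 2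
  have hs : ∑ i, ∑ j, ‖(U₁ * V - U₂ * V) i j‖ ^ 2 = s := by
    rw [← Matrix.sub_mul, sum_norm_sq_mul_of_mem_unitaryGroup _ hV]
  have hsqrt : 2 * √(s / 2) = √2 * √s := by
    rw [← Real.sqrt_mul zero_le_two, show 2 * s = 2 ^ 2 * (s / 2) by ring,
      Real.sqrt_mul (by positivity), Real.sqrt_sq zero_le_two]
  have hcol : ∀ i, ‖((U₁ * V)ᴴ * A * (U₁ * V)) i i - ((U₂ * V)ᴴ * A * (U₂ * V)) i i‖
      ≤ ‖toEuclideanCLM (𝕜 := ℂ) A‖ * (√2 * √s) := fun i => by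
    have hB₁ := mul_mem hU₁ hV
    have hB₂ := mul_mem hU₂ hV
    have hdiag := one_sub_norm_sq_diag_le_half_sum_norm_sq_sub hB₁ hB₂ i
    rw [hs] at hdiag
    calc _ ≤ 2 * ‖toEuclideanCLM (𝕜 := ℂ) A‖ * √(1 - ‖((U₁ * V)ᴴ * (U₂ * V)) i i‖ ^ 2) :=
          norm_diag_conjTranspose_mul_mul_sub_le A hB₁ hB₂ i
      _ ≤ 2 * ‖toEuclideanCLM (𝕜 := ℂ) A‖ * √(s / 2) := by gcongr
      _ = ‖toEuclideanCLM (𝕜 := ℂ) A‖ * (√2 * √s) := by rw [← hsqrt]; ring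
  rw [trace_mul_mul_conjTranspose_eq_sum_eigenvalues hX,
    trace_mul_mul_conjTranspose_eq_sum_eigenvalues hX,
    ← Finset.sum_sub_distrib, Finset.sum_mul, Finset.sum_mul]
  refine (norm_sum_le _ _).trans (Finset.sum_le_sum fun i _ => ?_)
  rw [← mul_sub, norm_mul, Complex.norm_real, Real.norm_eq_abs, mul_assoc (|_|)]
  exact mul_le_mul_of_nonneg_left (hcol i) (abs_nonneg _)

lemma norm_trace_div_le (A : Matrix n n ℂ) {X : Matrix n n ℂ} (hX : X.IsHermitian)
    {U : Matrix n n ℂ} (hU : U ∈ unitaryGroup n ℂ) :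
    ‖(A * U * X * Uᴴ).trace‖ / ‖toEuclideanCLM (𝕜 := ℂ) A‖ ≤ ∑ i, |hX.eigenvalues i| :=
  div_le_of_le_mul₀ (norm_nonneg _) (Finset.sum_nonneg fun _ _ => abs_nonneg _)
    (norm_trace_mul_mul_conjTranspose_le A hX hU)

lemma abs_norm_trace_div_sub_le (A : Matrix n n ℂ) {X : Matrix n n ℂ} (hX : X.IsHermitian)
    {U₁ U₂ : Matrix n n ℂ} (hU₁ : U₁ ∈ unitaryGroup n ℂ) (hU₂ : U₂ ∈ unitaryGroup n ℂ) :
    |‖(A * U₁ * X * U₁ᴴ).trace‖ / ‖toEuclideanCLM (𝕜 := ℂ) A‖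
        - ‖(A * U₂ * X * U₂ᴴ).trace‖ / ‖toEuclideanCLM (𝕜 := ℂ) A‖|
      ≤ (∑ i, |hX.eigenvalues i|) * (√2 * √(∑ i, ∑ j, ‖(U₁ - U₂) i j‖ ^ 2)) := by
  rw [← sub_div, abs_div, abs_norm]
  refine div_le_of_le_mul₀ (norm_nonneg _) (by positivity) ?_
  calc _ ≤ _ := abs_norm_sub_norm_le _ _
    _ ≤ _ := norm_trace_mul_mul_conjTranspose_sub_le A hX hU₁ hU₂
    _ = _ := by ring

end Matrix

theorem stmt8_general (D : ℕ) (𝒜 : Set (Matrix (Fin D) (Fin D) ℂ))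
    (X : Matrix (Fin D) (Fin D) ℂ) (hX : X.IsHermitian)
    (hXtr : ∑ i, |hX.eigenvalues i| ≤ 2)
    (n : ℕ) (hn : 1 ≤ n)
    (F : Matrix (Fin D) (Fin D) ℂ → ℝ)
    (hF : ∀ U, F U = sSup {r : ℝ | ∃ A ∈ 𝒜,
        r = ‖(A * U * X * Uᴴ).trace‖ / ‖Matrix.toEuclideanCLM (𝕜 := ℂ) A‖})
    (U₁ U₂ : Matrix (Fin D) (Fin D) ℂ)
    (hU₁ : U₁ ∈ Matrix.unitaryGroup (Fin D) ℂ)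
    (hU₂ : U₂ ∈ Matrix.unitaryGroup (Fin D) ℂ) :
    |F U₁ ^ n - F U₂ ^ n|
      ≤ (n : ℝ) * 2 ^ ((n : ℝ) + 1 / 2) *
          Real.sqrt (∑ i, ∑ j, ‖(U₁ - U₂) i j‖ ^ 2) := by
  set f : Matrix (Fin D) (Fin D) ℂ → Matrix (Fin D) (Fin D) ℂ → ℝ := fun U A =>
    ‖(A * U * X * Uᴴ).trace‖ / ‖Matrix.toEuclideanCLM (𝕜 := ℂ) A‖
  have hF' : ∀ U, F U = sSup (f U '' 𝒜) := fun U => by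
    rw [hF]; congr 1; ext r; simp [f, eq_comm]
  have hf : ∀ U ∈ unitaryGroup (Fin D) ℂ, ∀ A ∈ 𝒜, f U A ∈ Set.Icc 0 2 := fun U hU A _ =>
    ⟨by positivity, (norm_trace_div_le A hX hU).trans hXtr⟩
  have hF₁ : F U₁ ∈ Set.Icc 0 2 := hF' U₁ ▸ sSup_image_mem_Icc zero_le_two (hf U₁ hU₁)
  have hF₂ : F U₂ ∈ Set.Icc 0 2 := hF' U₂ ▸ sSup_image_mem_Icc zero_le_two (hf U₂ hU₂)
  have hlip : |F U₁ - F U₂| ≤ 2 * (√2 * √(∑ i, ∑ j, ‖(U₁ - U₂) i j‖ ^ 2)) := by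
    rw [hF', hF']
    exact abs_sSup_image_sub_sSup_image_le (hf U₁ hU₁) (hf U₂ hU₂) (by positivity)
      fun A _ => (abs_norm_trace_div_sub_le A hX hU₁ hU₂).trans (by gcongr)
  obtain ⟨m, rfl⟩ : ∃ m, n = m + 1 := ⟨n - 1, by omega⟩
  have hpow : (2 : ℝ) ^ (((m + 1 : ℕ) : ℝ) + 1 / 2) = 2 * 2 ^ m * √2 := by
    rw [Real.rpow_add zero_lt_two, Real.rpow_natCast, Real.sqrt_eq_rpow, pow_succ]
    ring
  calc |F U₁ ^ (m + 1) - F U₂ ^ (m + 1)| ≤ (m + 1) * 2 ^ m * |F U₁ - F U₂| :=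
        abs_pow_succ_sub_pow_succ_le hF₁ hF₂ m
    _ ≤ (m + 1) * 2 ^ m * (2 * (√2 * √(∑ i, ∑ j, ‖(U₁ - U₂) i j‖ ^ 2))) := by gcongr
    _ = _ := by rw [hpow]; push_cast; ring

/-- Lipschitz continuity of the `n`-th power of the seminorm
`F(U) = sup_{A ∈ 𝒜} |tr(A U X Uᴴ)| / ‖A‖_op`: if every `A ∈ 𝒜` is Hermitian and
nonzero, `X` is Hermitian with trace norm `Σᵢ|λᵢ(X)| ≤ 2`, and `n ≥ 1`, then for all
unitary `U₁, U₂`, `|F(U₁)ⁿ − F(U₂)ⁿ| ≤ n · 2^{n+1/2} · ‖U₁ − U₂‖_F`. -/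
theorem stmt8 (D : ℕ) (𝒜 : Set (Matrix (Fin D) (Fin D) ℂ)) (h𝒜 : 𝒜.Nonempty)
    (hA : ∀ A ∈ 𝒜, A.IsHermitian ∧ A ≠ 0)
    (X : Matrix (Fin D) (Fin D) ℂ) (hX : X.IsHermitian)
    (hXtr : ∑ i, |hX.eigenvalues i| ≤ 2)
    (n : ℕ) (hn : 1 ≤ n)
    (F : Matrix (Fin D) (Fin D) ℂ → ℝ)
    (hF : ∀ U, F U = sSup {r : ℝ | ∃ A ∈ 𝒜,
        r = ‖(A * U * X * Uᴴ).trace‖ / ‖Matrix.toEuclideanCLM (𝕜 := ℂ) A‖})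
    (U₁ U₂ : Matrix (Fin D) (Fin D) ℂ)
    (hU₁ : U₁ ∈ Matrix.unitaryGroup (Fin D) ℂ)
    (hU₂ : U₂ ∈ Matrix.unitaryGroup (Fin D) ℂ) :
    |F U₁ ^ n - F U₂ ^ n|
      ≤ (n : ℝ) * 2 ^ ((n : ℝ) + 1 / 2) *
          Real.sqrt (∑ i, ∑ j, ‖(U₁ - U₂) i j‖ ^ 2) :=
  stmt8_general D 𝒜 X hX hXtr n hn F hF U₁ U₂ hU₁ hU₂
end

section
/- Let d ≥ 2 be an integer and define G_d(x) = H(x) + x·log(d² − 1) − log d for x ∈ [0,1]. Then: (a) G_d is strictly increasing on the interval [0, 1 − 1/d²]; (b) G_d(0) = −log d < 0; (c) G_d(1/2) = (1/2)·log(4(1 − 1/d²)) > 0. Consequently there exists a unique α* ∈ (0, 1/2) with G_d(α*) = 0, and G_d(x) < 0 for all x ∈ (0, α*). -/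
/-!
`G_d` is the `d²`-ary entropy shifted by `-log d`. The `q`-ary entropy increases strictly on
`[0, 1 - 1/q]`, which contains `[0, 1/2]` when `q ≥ 2`; so the sign change between
`G_d(0) = -log d` and `G_d(1/2) = ½ log (4 (1 - 1/d²))` yields exactly one root in `(0, 1/2)`,
with `G_d` negative to its left.
-/

open Set

theorem StrictMonoOn.existsUnique_mem_Ioo_eq {α δ : Type*}
    [ConditionallyCompleteLinearOrder α] [TopologicalSpace α] [OrderTopology α]
    [DenselyOrdered α] [LinearOrder δ] [TopologicalSpace δ] [OrderClosedTopology δ]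
    {f : α → δ} {a b : α} {y : δ} (hab : a ≤ b) (hmono : StrictMonoOn f (Icc a b))
    (hf : ContinuousOn f (Icc a b)) (hy : y ∈ Ioo (f a) (f b)) :
    ∃! c, c ∈ Ioo a b ∧ f c = y := by
  obtain ⟨c, hc, hfc⟩ := intermediate_value_Ioo hab hf hy
  refine ⟨c, ⟨hc, hfc⟩, fun c' ⟨hc', hfc'⟩ => ?_⟩
  exact hmono.injOn (Ioo_subset_Icc_self hc') (Ioo_subset_Icc_self hc) (hfc'.trans hfc.symm)

namespace Real

lemma binEntropy_eq_neg_mul_log_sub (p : ℝ) :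
    binEntropy p = -p * log p - (1 - p) * log (1 - p) := by
  simp only [binEntropy, log_inv]
  ring

lemma qaryEntropy_eq_binEntropy_add (q : ℕ) (p : ℝ) :
    qaryEntropy q p = binEntropy p + p * log ((q : ℝ) - 1) := by
  simp only [qaryEntropy, Int.cast_sub, Int.cast_natCast, Int.cast_one]
  ring

lemma qaryEntropy_two_inv_sub_half_log {q : ℕ} (hq : 1 < q) :
    qaryEntropy q 2⁻¹ - 2⁻¹ * log q = 2⁻¹ * log (4 * (1 - 1 / q)) := by
  have hq' : (1 : ℝ) < q := by exact_mod_cast hq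
  have hlog4 : log 4 = 2 * log 2 := by
    rw [show (4 : ℝ) = 2 ^ 2 by norm_num, log_pow, Nat.cast_ofNat]
  rw [qaryEntropy_eq_binEntropy_add, binEntropy_two_inv,
    show 4 * (1 - 1 / (q : ℝ)) = 4 * (q - 1) / q by field_simp,
    log_div (by positivity) (by positivity), log_mul (by norm_num) (by linarith), hlog4]
  ring

end Real

open Real

/-- Properties of `G_d(x) = H(x) + x log(d²−1) − log d` for integer `d ≥ 2`, where `H`
is the binary entropy: `G_d` is strictly increasing on `[0, 1 − 1/d²]`,
`G_d(0) = −log d < 0`, `G_d(1/2) = (1/2) log(4(1 − 1/d²)) > 0`; consequently `G_d` has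
a unique root `α* ∈ (0, 1/2)` and `G_d < 0` on `(0, α*)`. -/
theorem stmt10 (d : ℕ) (hd : 2 ≤ d)
    (H : ℝ → ℝ) (hH : ∀ x, H x = -x * Real.log x - (1 - x) * Real.log (1 - x))
    (G : ℝ → ℝ) (hG : ∀ x, G x = H x + x * Real.log ((d : ℝ) ^ 2 - 1) - Real.log d) :
    StrictMonoOn G (Set.Icc 0 (1 - 1 / (d : ℝ) ^ 2)) ∧
    G 0 = -Real.log d ∧ G 0 < 0 ∧
    G (1 / 2) = (1 / 2) * Real.log (4 * (1 - 1 / (d : ℝ) ^ 2)) ∧ 0 < G (1 / 2) ∧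
    (∃! a : ℝ, a ∈ Set.Ioo (0 : ℝ) (1 / 2) ∧ G a = 0) ∧
    (∀ a ∈ Set.Ioo (0 : ℝ) (1 / 2), G a = 0 → ∀ x ∈ Set.Ioo 0 a, G x < 0) := by
  have hd' : (2 : ℝ) ≤ d := by exact_mod_cast hd
  have hq : 2 ≤ d ^ 2 := by nlinarith
  have hG' : G = fun x => qaryEntropy (d ^ 2) x - log d := by
    funext x
    rw [hG, hH, qaryEntropy_eq_binEntropy_add, binEntropy_eq_neg_mul_log_sub, Nat.cast_pow]
  have hlog : log d = 2⁻¹ * log ((d ^ 2 : ℕ) : ℝ) := by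
    rw [Nat.cast_pow, log_pow, Nat.cast_ofNat]
    ring
  have hmono : StrictMonoOn G (Icc 0 (1 - 1 / (d : ℝ) ^ 2)) := by
    rw [hG']
    exact_mod_cast (qaryEntropy_strictMonoOn hq).add_const (-log d)
  have hG0 : G 0 = -log d := by simp [hG']
  have hG0_neg : G 0 < 0 := by rw [hG0]; linarith [log_pos (by linarith : (1 : ℝ) < d)]
  have hGhalf : G (1 / 2) = 1 / 2 * log (4 * (1 - 1 / (d : ℝ) ^ 2)) := by
    rw [hG', one_div, hlog]
    exact (qaryEntropy_two_inv_sub_half_log (by omega)).trans (by rw [Nat.cast_pow])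
  have hinv : 1 / (d : ℝ) ^ 2 ≤ 1 / 4 := one_div_le_one_div_of_le (by norm_num) (by nlinarith)
  have hGhalf_pos : 0 < G (1 / 2) := by
    rw [hGhalf]
    exact mul_pos one_half_pos (log_pos (by linarith))
  have hmono_half : StrictMonoOn G (Icc 0 (1 / 2)) :=
    hmono.mono (Icc_subset_Icc_right (by linarith))
  refine ⟨hmono, hG0, hG0_neg, hGhalf, hGhalf_pos,
    hmono_half.existsUnique_mem_Ioo_eq (by norm_num) (by rw [hG']; fun_prop)
      ⟨hG0_neg, hGhalf_pos⟩, fun a ha hGa x hx => ?_⟩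
  rw [← hGa]
  exact hmono_half ⟨hx.1.le, hx.2.le.trans ha.2.le⟩ (Ioo_subset_Icc_self ha) hx.2
end

section
/- For each integer d ≥ 2 let α*(d) ∈ (0, 1/2) be the unique root of G_d(x) = H(x) + x·log(d² − 1) − log d in (0, 1/2). Then α* is strictly increasing in d (i.e., 2 ≤ d₁ < d₂ implies α*(d₁) < α*(d₂)), and α*(d) → 1/2 as d → ∞. -/
/-!
Write `G_y(x) = binEntropy x + x log (y² - 1) - log y` with a real parameter `y`. For fixed `y` it
is strictly increasing on `[0, 1/2]`, so roots are compared by comparing values. In `y`,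
`∂_y G_y(x) = 2xy / (y² - 1) - 1 / y` is negative as long as `x < (1 - y⁻²) / 2`, and the root
`α(y)` lies below that point because `G_y((1 - y⁻²) / 2) > 0` (concavity of the entropy gives
`binEntropy ≥ 2x log 2` on `[0, 1/2]`). Hence `G_{y₂}(α(y₁)) < G_{y₁}(α(y₁)) = 0` for `y₁ < y₂`,
i.e. `α(y₁) < α(y₂)`. For the limit, `G_y(α) = 0` and `binEntropy ≤ log 2` give
`(1/2 - α) log (y² - 1) ≤ log 2`.
-/

open Real Set Filter Topology

noncomputable def ethG (y x : ℝ) : ℝ := binEntropy x + x * log (y ^ 2 - 1) - log y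

lemma two_mul_log_two_le_binEntropy {x : ℝ} (hx₀ : 0 ≤ x) (hx : x ≤ 2⁻¹) :
    2 * x * log 2 ≤ binEntropy x := by
  have h := strictConcave_binEntropy.concaveOn.2 (by norm_num : (0 : ℝ) ∈ Icc 0 1)
    (by norm_num : (2⁻¹ : ℝ) ∈ Icc 0 1) (by linarith : 0 ≤ 1 - 2 * x) (by linarith : 0 ≤ 2 * x)
    (by ring)
  simp only [smul_eq_mul, mul_zero, zero_add, binEntropy_zero, binEntropy_two_inv] at h
  rw [mul_comm 2 x, mul_inv_cancel_right₀ two_ne_zero] at h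
  linarith

lemma ethG_strictMonoOn {y : ℝ} (hy : 2 ≤ y ^ 2) : StrictMonoOn (ethG y) (Icc 0 2⁻¹) := by
  have hL : 0 ≤ log (y ^ 2 - 1) := log_nonneg (by linarith)
  intro a ha b hb hab
  have := binEntropy_strictMonoOn ha hb hab
  unfold ethG
  nlinarith

lemma ethG_one_sub_inv_sq_div_two_pos {y : ℝ} (hy : 2 ≤ y) : 0 < ethG y ((1 - (y ^ 2)⁻¹) / 2) := by
  set t := (y ^ 2)⁻¹ with ht
  have hy2 : 4 ≤ y ^ 2 := by nlinarith
  have ht₀ : 0 < t := by positivity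
  have ht₁ : t ≤ 4⁻¹ := inv_anti₀ (by norm_num) hy2
  have hent : (1 - t) * log 2 ≤ binEntropy ((1 - t) / 2) := by
    convert two_mul_log_two_le_binEntropy (x := (1 - t) / 2) (by linarith) (by linarith) using 1
    ring
  have hsplit : log (y ^ 2 - 1) = 2 * log y + log (1 - t) := by
    rw [show 2 * log y = log (y ^ 2) by simp [log_pow], ← log_mul (by positivity) (by linarith)]
    congr 1
    rw [ht]; field_simp
  have hlog₁ : -t / (1 - t) ≤ log (1 - t) := by
    have := one_sub_inv_le_log_of_pos (x := 1 - t) (by linarith)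
    have heq : 1 - (1 - t)⁻¹ = -t / (1 - t) := by field_simp [show 1 - t ≠ 0 by linarith]; ring
    linarith
  have hlogy : t * log y ≤ 4⁻¹ := by
    have h1 := log_le_sub_one_of_pos (x := y) (by linarith)
    have h2 : t * (y - 1) ≤ 4⁻¹ := by
      rw [ht, inv_mul_le_iff₀ (by positivity)]; nlinarith
    nlinarith
  have hl2 := log_two_gt_d9
  have hmul : (1 - t) / 2 * log (1 - t) ≥ -t / 2 := by
    have := mul_le_mul_of_nonneg_left hlog₁ (show 0 ≤ (1 - t) / 2 by linarith)
    have heq : (1 - t) / 2 * (-t / (1 - t)) = -t / 2 := by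
      field_simp [show 1 - t ≠ 0 by linarith]
    linarith
  unfold ethG
  rw [hsplit]
  nlinarith

lemma hasDerivAt_ethG_left {x y : ℝ} (hy : 1 < y) :
    HasDerivAt (fun y => ethG y x) (x * (2 * y / (y ^ 2 - 1)) - y⁻¹) y := by
  have hsq : HasDerivAt (fun y : ℝ => y ^ 2 - 1) (2 * y) y := by
    simpa using (hasDerivAt_pow 2 y).sub_const 1
  have hlog := (hsq.log (by nlinarith)).const_mul x
  exact ((hlog.const_add (binEntropy x)).sub (hasDerivAt_log (by linarith))).congr_deriv
    (by ring)

lemma ethG_lt_ethG_of_lt {x y₁ y₂ : ℝ} (hy₁ : 1 < y₁) (hx : 1 < (1 - 2 * x) * y₁ ^ 2)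
    (hy : y₁ < y₂) : ethG y₂ x < ethG y₁ x := by
  refine strictAntiOn_of_deriv_neg (f := fun y => ethG y x) (convex_Ici y₁) (fun y hy => ?_)
    (fun y hy => ?_) self_mem_Ici hy.le hy
  · exact (hasDerivAt_ethG_left (lt_of_lt_of_le hy₁ hy)).continuousAt.continuousWithinAt
  · rw [interior_Ici] at hy
    have hy' : 1 < y := hy₁.trans hy
    rw [(hasDerivAt_ethG_left hy').deriv, sub_neg, mul_div_assoc', div_lt_iff₀ (by nlinarith)]
    -- the sign condition `(1 - 2x) y² > 1` only improves as `y` grows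
    have h2x : 0 < 1 - 2 * x := by
      by_contra h; nlinarith
    have : (1 - 2 * x) * y₁ ^ 2 ≤ (1 - 2 * x) * y ^ 2 := by gcongr; exact le_of_lt hy
    rw [inv_mul_eq_div, lt_div_iff₀ (by linarith)]
    nlinarith

lemma lt_of_ethG_eq_zero {x y : ℝ} (hy : 2 ≤ y) (hx : x ∈ Icc 0 2⁻¹) (h : ethG y x = 0) :
    x < (1 - (y ^ 2)⁻¹) / 2 := by
  have hy2 : 4 ≤ y ^ 2 := by nlinarith
  have hinv : (y ^ 2)⁻¹ ≤ 1 := inv_le_one_of_one_le₀ (by linarith)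
  have hmem : (1 - (y ^ 2)⁻¹) / 2 ∈ Icc (0 : ℝ) 2⁻¹ :=
    ⟨by linarith, by linarith [inv_nonneg.2 (by positivity : 0 ≤ y ^ 2)]⟩
  refine ((ethG_strictMonoOn (y := y) (by linarith)).lt_iff_lt hx hmem).1 ?_
  rw [h]
  exact ethG_one_sub_inv_sq_div_two_pos hy

lemma lt_of_ethG_eq_zero_of_lt {x₁ x₂ y₁ y₂ : ℝ} (hy₁ : 2 ≤ y₁) (hy : y₁ < y₂)
    (hx₁ : x₁ ∈ Icc 0 2⁻¹) (hx₂ : x₂ ∈ Icc 0 2⁻¹) (h₁ : ethG y₁ x₁ = 0) (h₂ : ethG y₂ x₂ = 0) :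
    x₁ < x₂ := by
  have hgap := lt_of_ethG_eq_zero hy₁ hx₁ h₁
  have hcond : 1 < (1 - 2 * x₁) * y₁ ^ 2 := by
    have : 0 < y₁ ^ 2 := by positivity
    have := mul_lt_mul_of_pos_right (show (y₁ ^ 2)⁻¹ < 1 - 2 * x₁ by linarith) this
    rwa [inv_mul_cancel₀ (by positivity)] at this
  have hlt := ethG_lt_ethG_of_lt (by linarith) hcond hy
  refine ((ethG_strictMonoOn (y := y₂) (by nlinarith)).lt_iff_lt hx₁ hx₂).1 ?_
  linarith

lemma half_sub_mul_log_le_log_two {x y : ℝ} (hy : 1 < y) (h : ethG y x = 0) :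
    (2⁻¹ - x) * log (y ^ 2 - 1) ≤ log 2 := by
  have hlog : log (y ^ 2 - 1) ≤ 2 * log y := by
    rw [show 2 * log y = log (y ^ 2) by simp [log_pow]]
    exact log_le_log (by nlinarith) (by linarith)
  have := binEntropy_le_log_two (p := x)
  unfold ethG at h
  linarith

lemma tendsto_log_natCast_sq_sub_one_atTop :
    Tendsto (fun d : ℕ => log ((d : ℝ) ^ 2 - 1)) atTop atTop :=
  tendsto_log_atTop.comp <| tendsto_atTop_add_const_right _ _ <|
    (tendsto_pow_atTop two_ne_zero).comp tendsto_natCast_atTop_atTop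

lemma tendsto_of_ethG_eq_zero {α : ℕ → ℝ}
    (hα : ∀ d : ℕ, 2 ≤ d → α d ≤ 2⁻¹ ∧ ethG d (α d) = 0) : Tendsto α atTop (𝓝 2⁻¹) := by
  have hlower : Tendsto (fun d : ℕ => 2⁻¹ - log 2 / log ((d : ℝ) ^ 2 - 1)) atTop (𝓝 2⁻¹) := by
    simpa [div_eq_mul_inv] using
      (tendsto_log_natCast_sq_sub_one_atTop.inv_tendsto_atTop.const_mul (log 2)).const_sub 2⁻¹
  refine tendsto_of_tendsto_of_tendsto_of_le_of_le' hlower tendsto_const_nhds ?_ ?_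
  all_goals filter_upwards [eventually_ge_atTop 2] with d hd
  · have hd' : (2 : ℝ) ≤ d := by exact_mod_cast hd
    have hL : 0 < log ((d : ℝ) ^ 2 - 1) := log_pos (by nlinarith)
    rw [sub_le_comm, le_div_iff₀ hL]
    exact half_sub_mul_log_le_log_two (by linarith) (hα d hd).2
  · exact (hα d hd).1

/-- Monotonicity and limit of the ETH threshold for spin systems: if for each `d ≥ 2`,
`α d ∈ (0, 1/2)` is a root of `G_d(x) = H(x) + x log(d²−1) − log d`, then `α` is
strictly increasing in `d` and `α d → 1/2` as `d → ∞`. -/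
theorem stmt12
    (H : ℝ → ℝ) (hH : ∀ x, H x = -x * Real.log x - (1 - x) * Real.log (1 - x))
    (G : ℕ → ℝ → ℝ)
    (hG : ∀ (d : ℕ) (x : ℝ), G d x = H x + x * Real.log ((d : ℝ) ^ 2 - 1) - Real.log d)
    (α : ℕ → ℝ)
    (hα : ∀ d, 2 ≤ d → α d ∈ Set.Ioo (0 : ℝ) (1 / 2) ∧ G d (α d) = 0) :
    (∀ d₁ d₂ : ℕ, 2 ≤ d₁ → d₁ < d₂ → α d₁ < α d₂) ∧
    Filter.Tendsto α Filter.atTop (nhds (1 / 2)) := by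
  have hH' : H = binEntropy := funext fun x => by
    rw [hH, binEntropy, log_inv, log_inv]; ring
  have hroot : ∀ d, 2 ≤ d → α d ∈ Icc 0 2⁻¹ ∧ ethG d (α d) = 0 := fun d hd => by
    obtain ⟨⟨h₀, h₁⟩, hzero⟩ := hα d hd
    refine ⟨⟨h₀.le, by linarith⟩, ?_⟩
    rwa [hG, hH'] at hzero
  refine ⟨fun d₁ d₂ hd₁ hd => ?_, ?_⟩
  · have hd₂ : 2 ≤ d₂ := hd₁.trans hd.le
    exact lt_of_ethG_eq_zero_of_lt (by exact_mod_cast hd₁) (by exact_mod_cast hd)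
      (hroot d₁ hd₁).1 (hroot d₂ hd₂).1 (hroot d₁ hd₁).2 (hroot d₂ hd₂).2
  · rw [one_div]
    exact tendsto_of_ethG_eq_zero fun d hd => ⟨(hroot d hd).1.2, (hroot d hd).2⟩
end

section
/- Let ρ > 0 and define G_ρ(α) = 2·(1 + αρ)·H(1/(1 + αρ)) − (1 + ρ)·H(1/(1 + ρ)) for α ∈ [0, 1]. Then: (a) G_ρ is strictly increasing on (0, 1]; (b) G_ρ(0) = −(1 + ρ)·H(1/(1 + ρ)) < 0; (c) G_ρ(1/2) = log((1 + ρ/2)²/(1 + ρ)) + ρ·log((2 + ρ)/(1 + ρ)) > 0. Consequently there exists a unique α* ∈ (0, 1/2) with G_ρ(α*) = 0, and G_ρ(α) < 0 for all α ∈ (0, α*). -/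
/-!
With `f t = (1 + t) log (1 + t) - t log t`, the identity `(1 + t) H (1 / (1 + t)) = f t` turns
the rate function into `G α = 2 f (α ρ) - f ρ`. Since `f' t = log (1 + t) - log t > 0`, `f` is
strictly increasing on `[0, ∞)`, hence so is `G`; the sign change of `G` on `[0, 1/2]` then
gives a unique root by the intermediate value theorem.
-/

open Real Set

noncomputable section

/-- The entropy per site `lim log (N+V choose N) / V` of bosons at density `t = N / V`. -/
def boseEntropy (t : ℝ) : ℝ := (1 + t) * log (1 + t) - t * log t

lemma one_add_mul_binEntropy_inv_one_add {t : ℝ} (ht : 0 ≤ t) :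
    (1 + t) * binEntropy (1 / (1 + t)) = boseEntropy t := by
  have h1t : (0 : ℝ) < 1 + t := by linarith
  rcases ht.eq_or_lt with rfl | ht
  · simp [boseEntropy]
  have hsub : 1 - 1 / (1 + t) = t / (1 + t) := by field_simp; ring
  rw [binEntropy, hsub, boseEntropy, one_div, inv_inv, inv_div, log_div h1t.ne' ht.ne']
  field_simp
  ring

lemma boseEntropy_zero : boseEntropy 0 = 0 := by simp [boseEntropy]

lemma continuous_boseEntropy : Continuous boseEntropy :=
  (continuous_mul_log.comp (continuous_const.add continuous_id)).sub continuous_mul_log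

lemma hasDerivAt_boseEntropy {t : ℝ} (ht : 0 < t) :
    HasDerivAt boseEntropy (log (1 + t) - log t) t := by
  have hshift : HasDerivAt (fun t : ℝ => (1 + t) * log (1 + t)) (log (1 + t) + 1) t := by
    simpa [Function.comp_def] using
      (hasDerivAt_mul_log (by linarith : 1 + t ≠ 0)).comp t ((hasDerivAt_id t).const_add 1)
  exact (hshift.sub (hasDerivAt_mul_log ht.ne')).congr_deriv (by ring)

lemma strictMonoOn_boseEntropy : StrictMonoOn boseEntropy (Ici 0) := by
  refine strictMonoOn_of_deriv_pos (convex_Ici 0) continuous_boseEntropy.continuousOn ?_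
  intro t ht
  rw [interior_Ici] at ht
  rw [(hasDerivAt_boseEntropy ht).deriv, sub_pos]
  exact log_lt_log ht (by linarith)

lemma boseEntropy_pos {t : ℝ} (ht : 0 < t) : 0 < boseEntropy t := by
  simpa [boseEntropy_zero] using strictMonoOn_boseEntropy self_mem_Ici ht.le ht

/-- `G_ρ(α)`, in the form valid for `α ≥ 0`. -/
def boseRate (ρ α : ℝ) : ℝ := 2 * boseEntropy (α * ρ) - boseEntropy ρ

section boseRate

variable {ρ : ℝ}

lemma continuous_boseRate : Continuous (boseRate ρ) :=
  (continuous_const.mul (continuous_boseEntropy.comp (continuous_id.mul continuous_const))).sub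
    continuous_const

lemma strictMonoOn_boseRate (hρ : 0 < ρ) : StrictMonoOn (boseRate ρ) (Ici 0) := by
  intro a ha b hb hab
  have := strictMonoOn_boseEntropy (mul_nonneg ha hρ.le) (mul_nonneg hb hρ.le)
    (mul_lt_mul_of_pos_right hab hρ)
  unfold boseRate
  linarith

lemma boseRate_zero : boseRate ρ 0 = -boseEntropy ρ := by
  simp [boseRate, boseEntropy_zero]

lemma boseRate_half (hρ : 0 < ρ) :
    boseRate ρ (1 / 2) = log ((1 + ρ / 2) ^ 2 / (1 + ρ)) + ρ * log ((2 + ρ) / (1 + ρ)) := by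
  have h2ρ : 2 + ρ = 2 * (1 + ρ / 2) := by ring
  rw [boseRate, boseEntropy, boseEntropy, log_div (by positivity) (by positivity),
    log_div (by positivity) (by positivity), log_pow, div_mul_eq_mul_div, one_mul,
    log_div hρ.ne' two_ne_zero, h2ρ, log_mul two_ne_zero (by positivity)]
  push_cast
  ring

lemma boseRate_half_pos (hρ : 0 < ρ) : 0 < boseRate ρ (1 / 2) := by
  rw [boseRate_half hρ]
  have hsq : 0 < log ((1 + ρ / 2) ^ 2 / (1 + ρ)) :=
    log_pos <| (one_lt_div (by positivity)).mpr (by nlinarith)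
  have hquot : 0 < log ((2 + ρ) / (1 + ρ)) :=
    log_pos <| (one_lt_div (by positivity)).mpr (by linarith)
  positivity

end boseRate

lemma existsUnique_mem_Ioo_eq_zero_of_strictMonoOn {g : ℝ → ℝ} {a b : ℝ} (hab : a ≤ b)
    (hcont : ContinuousOn g (Icc a b)) (hmono : StrictMonoOn g (Icc a b))
    (ha : g a < 0) (hb : 0 < g b) : ∃! c, c ∈ Ioo a b ∧ g c = 0 := by
  obtain ⟨c, hc, hgc⟩ := intermediate_value_Ioo hab hcont ⟨ha, hb⟩
  exact ⟨c, ⟨hc, hgc⟩, fun d ⟨hd, hgd⟩ =>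
    hmono.injOn (Ioo_subset_Icc_self hd) (Ioo_subset_Icc_self hc) (hgd.trans hgc.symm)⟩

end

/-- Properties of the Bose-system rate function
`G_ρ(α) = 2(1+αρ)H(1/(1+αρ)) − (1+ρ)H(1/(1+ρ))` for `ρ > 0`: it is strictly
increasing on `(0,1]`, negative at `0`, positive at `1/2` with the stated explicit
values; consequently it has a unique root `α* ∈ (0, 1/2)` and is negative on
`(0, α*)`. -/
theorem stmt14 (ρ : ℝ) (hρ : 0 < ρ)
    (H : ℝ → ℝ) (hH : ∀ x, H x = -x * Real.log x - (1 - x) * Real.log (1 - x))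
    (G : ℝ → ℝ)
    (hG : ∀ α, G α = 2 * (1 + α * ρ) * H (1 / (1 + α * ρ)) -
        (1 + ρ) * H (1 / (1 + ρ))) :
    StrictMonoOn G (Set.Ioc 0 1) ∧
    G 0 = -((1 + ρ) * H (1 / (1 + ρ))) ∧ G 0 < 0 ∧
    G (1 / 2) = Real.log ((1 + ρ / 2) ^ 2 / (1 + ρ)) +
      ρ * Real.log ((2 + ρ) / (1 + ρ)) ∧ 0 < G (1 / 2) ∧
    (∃! a : ℝ, a ∈ Set.Ioo (0 : ℝ) (1 / 2) ∧ G a = 0) ∧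
    (∀ a ∈ Set.Ioo (0 : ℝ) (1 / 2), G a = 0 → ∀ α ∈ Set.Ioo 0 a, G α < 0) := by
  obtain rfl : H = binEntropy := funext fun x => by
    rw [hH, binEntropy, log_inv, log_inv]
    ring
  have hGeq : EqOn (boseRate ρ) G (Ici 0) := fun α hα => by
    rw [hG, boseRate, mul_assoc, one_add_mul_binEntropy_inv_one_add (mul_nonneg hα hρ.le),
      one_add_mul_binEntropy_inv_one_add hρ.le]
  have hmono : StrictMonoOn G (Ici 0) := (strictMonoOn_boseRate hρ).congr hGeq
  have hG0 : G 0 = -((1 + ρ) * binEntropy (1 / (1 + ρ))) := by simp [hG]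
  have hGhalf := (hGeq (by norm_num : (1 / 2 : ℝ) ∈ Ici 0)).symm
  have hG0_neg : G 0 < 0 := by
    rw [hG0, one_add_mul_binEntropy_inv_one_add hρ.le, neg_neg_iff_pos]
    exact boseEntropy_pos hρ
  have hGhalf_pos : 0 < G (1 / 2) := hGhalf ▸ boseRate_half_pos hρ
  refine ⟨hmono.mono (Ioc_subset_Ioi_self.trans Ioi_subset_Ici_self), hG0, hG0_neg,
    hGhalf ▸ boseRate_half hρ, hGhalf_pos, ?_, ?_⟩
  · exact existsUnique_mem_Ioo_eq_zero_of_strictMonoOn (by norm_num)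
      (continuous_boseRate.continuousOn.congr fun α hα => (hGeq hα.1).symm)
      (hmono.mono Icc_subset_Ici_self) hG0_neg hGhalf_pos
  · rintro a ha hGa α hα
    exact hGa ▸ hmono hα.1.le ha.1.le hα.2
end
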